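/- arXiv:2101.08064 — 3 statements merged into one kernel-verified Lean document; each statement's English description precedes it below -/
import Mathlib

section
/- For a ≥ 0 and the measure μ_a = (1−|x|²)^{a−1/2} dV on the unit ball B ⊂ ℝ^n, there is a constant c > 0 (depending on n and a) such that for all x ∈ B and 0 < r < π: μ_a(B_ρ(x,r)) ≥ c · r^{n+2a} if |x| > 1/2, and μ_a(B_ρ(x,r)) ≥ c · r^n if |x| ≤ 1/2. -/
open MeasureTheory Metric Real
open scoped ENNReal BigOperators

noncomputable section

abbrev E (n : ℕ) := EuclideanSpace ℝ (Fin n)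

/-- Evaluation of a multivariate polynomial at a point of `ℝⁿ`. -/
noncomputable def peval {n : ℕ} (p : MvPolynomial (Fin n) ℝ) (x : E n) : ℝ :=
  MvPolynomial.eval (fun i => x i) p

/-- The anisotropic metric on the closed unit ball. -/
noncomputable def rho {n : ℕ} (x y : E n) : ℝ :=
  Real.arccos ((inner ℝ x y : ℝ) + Real.sqrt (1 - ‖x‖^2) * Real.sqrt (1 - ‖y‖^2))

/-- The measure `(1-|x|²)^{a-1/2} dV` on the closed unit ball. -/
noncomputable def muA (n : ℕ) (a : ℝ) : Measure (E n) :=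
  (volume.restrict (closedBall 0 1)).withDensity
    (fun x => ENNReal.ofReal ((1 - ‖x‖^2) ^ (a - 1/2)))

/-- Ball of radius `r` around `x` in the anisotropic metric `rho`. -/
noncomputable def rhoBall {n : ℕ} (x : E n) (r : ℝ) : Set (E n) :=
  {y ∈ closedBall (0 : E n) 1 | rho x y < r}

set_option maxHeartbeats 1000000

lemma jordanMin {θ : ℝ} (h0 : 0 ≤ θ) (h1 : θ ≤ π) : (1/2) * min θ (π - θ) ≤ Real.sin θ := by
  rcases le_total θ (π/2) with h | h
  · have := Real.mul_le_sin h0 h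
    have hπ : π ≤ 4 := by linarith [Real.pi_le_four]
    have hmin : min θ (π - θ) = θ := min_eq_left (by linarith)
    rw [hmin]
    have h2 : (1/2 : ℝ) * θ ≤ 2/π * θ := by
      apply mul_le_mul_of_nonneg_right _ h0
      rw [div_le_div_iff₀ (by norm_num) Real.pi_pos]
      linarith
    linarith
  · have h0' : 0 ≤ π - θ := by linarith
    have h1' : π - θ ≤ π/2 := by linarith
    have := Real.mul_le_sin h0' h1'
    have hπ : π ≤ 4 := by linarith [Real.pi_le_four]
    have hmin : min θ (π - θ) = π - θ := min_eq_right (by linarith)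
    rw [hmin, ← Real.sin_pi_sub]
    have h2 : (1/2 : ℝ) * (π - θ) ≤ 2/π * (π - θ) := by
      apply mul_le_mul_of_nonneg_right _ h0'
      rw [div_le_div_iff₀ (by norm_num) Real.pi_pos]
      linarith
    linarith

lemma sin_lip (x y : ℝ) : |Real.sin x - Real.sin y| ≤ |x - y| := by
  have h := Real.sin_sub_sin x y
  rw [h, abs_mul, abs_mul]
  have h1 : |Real.sin ((x - y)/2)| ≤ |(x-y)/2| := Real.abs_sin_le_abs
  have h2 : |Real.cos ((x+y)/2)| ≤ 1 := Real.abs_cos_le_one _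
  calc |2| * |Real.sin ((x - y)/2)| * |Real.cos ((x+y)/2)|
      ≤ |2| * |(x-y)/2| * 1 := by
        apply mul_le_mul _ h2 (abs_nonneg _) (by positivity)
        exact mul_le_mul_of_nonneg_left h1 (abs_nonneg _)
    _ = |x - y| := by rw [mul_one, abs_div, abs_two]; ring

lemma sqrt_lb {A B : ℝ} (hA : 0 ≤ A) (hB : 0 ≤ B) (hBA : B ≤ A^2) :
    A - B/A ≤ Real.sqrt (A^2 - B) := by
  rcases eq_or_lt_of_le hA with h | hA
  · have hA0 : A = 0 := h.symm
    subst hA0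
    have hB0 : B = 0 := le_antisymm (by simpa using hBA) hB
    subst hB0
    simp
  · have h1 : 0 ≤ A - B/A := by
      rw [sub_nonneg, div_le_iff₀ hA]; nlinarith
    rw [← Real.sqrt_sq h1]
    apply Real.sqrt_le_sqrt
    have h2 : (B/A)^2 ≤ B := by
      rw [div_pow, div_le_iff₀ (by positivity)]
      nlinarith
    have : (A - B/A)^2 = A^2 - 2*B + (B/A)^2 := by field_simp; ring
    nlinarith


private lemma arithA {p : ℝ} (h1 : -1 ≤ p) (h2 : p ≤ 1) : 0 ≤ 1 - p^2 := by nlinarith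

private lemma arithB {r u Q : ℝ} (hr : 0 < r) (hu : r/8 ≤ u) (hQ : Q ≤ r^2/256) :
    Q ≤ u^2/4 := by nlinarith

private lemma arithC {u S Q : ℝ} (h1 : S ≤ 3/2*u) (h2 : Q ≤ u^2/4) (hS : 0 ≤ S) :
    S^2/3 ≤ u^2 - Q := by nlinarith

private lemma arithD {u S Q : ℝ} (h1 : u ≤ 3/2*S) (h2 : 0 ≤ Q) (hu : 0 ≤ u) :
    u^2 - Q ≤ 4*S^2 := by nlinarith

private lemma arithE {t S : ℝ} (h : S^2/3 ≤ 1 - t^2) (ht : 0 ≤ t) : t ≤ 1 := by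
  nlinarith [sq_nonneg S]

private lemma arithF {sa sg s c : ℝ} (h1 : sg - sa = 2*s*c) (h2 : 0 ≤ s) (h3 : 0 ≤ c)
    (h4 : 0 ≤ sg) : sa ≤ 2*sg := by nlinarith

private lemma arithG {r u v : ℝ} (h1 : r/8 ≤ u) (h2 : r/8 ≤ v) (hr : 0 ≤ r) :
    r^2/32 ≤ 2*u*v := by nlinarith

private lemma arithH {c r : ℝ} (hc : 1 ≤ c) : c * (r/(16*c))^2 ≤ r^2/256 := by
  have hc0 : (0:ℝ) < c := by linarith
  have he : c * (r/(16*c))^2 = r^2/(256*c) := by field_simp; ring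
  rw [he]
  apply div_le_div_of_nonneg_left (sq_nonneg r) (by norm_num)
  linarith

lemma mem_est (n : ℕ) (hn : 1 ≤ n) (x : E n) (hx : ‖x‖ ≤ 1)
    (r : ℝ) (hr0 : 0 < r) (hrπ : r < π)
    (b : OrthonormalBasis (Fin n) ℝ (E n)) (hb : x = ‖x‖ • b ⟨0, hn⟩)
    (y : E n)
    (hy0 : b.repr y ⟨0, hn⟩ ∈
      Set.Icc (Real.cos (min (Real.arccos ‖x‖ + r/4) (π/2) + r/8))
              (Real.cos (min (Real.arccos ‖x‖ + r/4) (π/2))))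
    (hyi : ∀ i : Fin n, i ≠ ⟨0, hn⟩ → |b.repr y i| ≤ r/(16*n)) :
    y ∈ rhoBall x r ∧
    (Real.sin (min (Real.arccos ‖x‖ + r/4) (π/2) + r/16))^2/3 ≤ 1 - ‖y‖^2 ∧
    1 - ‖y‖^2 ≤ 4*(Real.sin (min (Real.arccos ‖x‖ + r/4) (π/2) + r/16))^2 := by
  have hπ4 : π ≤ 4 := Real.pi_le_four
  have hπ3 : 3 < π := Real.pi_gt_three
  set s : ℝ := ‖x‖ with hs
  have hs0 : 0 ≤ s := norm_nonneg x
  set α : ℝ := Real.arccos s with hα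
  have hα0 : 0 ≤ α := Real.arccos_nonneg s
  have hα2 : α ≤ π/2 := by
    rw [hα, Real.arccos_eq_pi_div_two_sub_arcsin]
    have := Real.arcsin_nonneg.2 hs0
    linarith
  set β : ℝ := min (α + r/4) (π/2) with hβ
  have hβl : r/4 ≤ β := le_min (by linarith) (by linarith)
  have hβα : α ≤ β := le_min (by linarith) hα2
  have hβu : β ≤ π/2 := min_le_right _ _
  have hβα4 : β ≤ α + r/4 := min_le_left _ _
  set S : ℝ := Real.sin (β + r/16) with hS
  set i0 : Fin n := ⟨0, hn⟩ with hi0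
  set p : ℝ := b.repr y i0 with hp
  have hny : ‖y‖^2 = ∑ i, (b.repr y i)^2 := by
    rw [← b.repr.norm_map y, EuclideanSpace.norm_eq, Real.sq_sqrt (by positivity)]
    simp [sq_abs]
  set Q : ℝ := ∑ i ∈ Finset.univ.erase i0, (b.repr y i)^2 with hQ
  have hQ0 : 0 ≤ Q := Finset.sum_nonneg fun i _ => sq_nonneg _
  have hsplit : ‖y‖^2 = p^2 + Q := by
    rw [hny, ← Finset.add_sum_erase Finset.univ _ (Finset.mem_univ i0)]
  have hn1 : (1:ℝ) ≤ (n:ℝ) := by exact_mod_cast hn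
  have hQle : Q ≤ r^2/256 := by
    have h1 : Q ≤ ∑ _i ∈ Finset.univ.erase i0, (r/(16*n))^2 := by
      apply Finset.sum_le_sum
      intro i hi
      have := hyi i (Finset.ne_of_mem_erase hi)
      calc (b.repr y i)^2 = |b.repr y i|^2 := (sq_abs _).symm
        _ ≤ (r/(16*n))^2 := by
            apply pow_le_pow_left₀ (abs_nonneg _) this
    have h2 : (Finset.univ.erase i0).card ≤ n := by
      calc (Finset.univ.erase i0).card ≤ Finset.univ.card := Finset.card_le_card (Finset.erase_subset _ _)
        _ = n := by simp
    have h3 : ∑ _i ∈ Finset.univ.erase i0, (r/(16*n))^2 = (Finset.univ.erase i0).card * (r/(16*n))^2 := by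
      rw [Finset.sum_const, nsmul_eq_mul]
    have h4 : ((Finset.univ.erase i0).card : ℝ) ≤ (n:ℝ) := by exact_mod_cast h2
    have h5 : (0:ℝ) < (n:ℝ) := by linarith
    have h6 : ((Finset.univ.erase i0).card : ℝ) * (r/(16*n))^2 ≤ (n:ℝ) * (r/(16*n))^2 := by
      apply mul_le_mul_of_nonneg_right h4 (by positivity)
    have h7 : (n:ℝ) * (r/(16*n))^2 ≤ r^2/256 := arithH hn1
    calc Q ≤ _ := h1
      _ = _ := h3
      _ ≤ _ := h6
      _ ≤ _ := h7
  -- gamma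
  have hβr8 : β + r/8 ≤ π := by linarith
  have hpmem := hy0
  have hp1 : p ≤ 1 := le_trans hpmem.2 (Real.cos_le_one β)
  have hpm1 : (-1:ℝ) ≤ p := le_trans (Real.neg_one_le_cos _) hpmem.1
  set γ : ℝ := Real.arccos p with hγ
  have harc : ∀ u v : ℝ, u ≤ v → Real.arccos v ≤ Real.arccos u := by
    intro u v h
    rw [Real.arccos_eq_pi_div_two_sub_arcsin, Real.arccos_eq_pi_div_two_sub_arcsin]
    linarith [Real.monotone_arcsin h]
  have hγl : β ≤ γ := by
    have := harc p (Real.cos β) hpmem.2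
    rwa [Real.arccos_cos (by linarith) (by linarith)] at this
  have hγu : γ ≤ β + r/8 := by
    have := harc (Real.cos (β + r/8)) p hpmem.1
    rwa [Real.arccos_cos (by linarith) hβr8] at this
  have hγ0 : 0 ≤ γ := by linarith
  have hγπ : γ ≤ π := by linarith
  have hpγ : p = Real.cos γ := (Real.cos_arccos hpm1 hp1).symm
  have hsin2 : Real.sin γ ^ 2 = 1 - p^2 := by
    rw [hγ, Real.sin_arccos, Real.sq_sqrt (arithA hpm1 hp1)]
  have hsinγ0 : 0 ≤ Real.sin γ := Real.sin_nonneg_of_nonneg_of_le_pi hγ0 hγπ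
  have hsγ_lb : r/8 ≤ Real.sin γ := by
    have hmin : r/4 ≤ min γ (π - γ) := le_min (by linarith) (by linarith)
    have := jordanMin hγ0 hγπ
    linarith
  have hS_lb : r/8 ≤ S := by
    have h0θ : 0 ≤ β + r/16 := by linarith
    have h1θ : β + r/16 ≤ π := by linarith
    have hmin : r/4 ≤ min (β + r/16) (π - (β + r/16)) := le_min (by linarith) (by linarith)
    have := jordanMin h0θ h1θ
    rw [hS]
    linarith
  have hSγ : |Real.sin γ - S| ≤ r/16 := by
    have h1 := sin_lip γ (β + r/16)
    have h2 : |γ - (β + r/16)| ≤ r/16 := abs_le.2 ⟨by linarith, by linarith⟩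
    rw [hS]
    linarith
  have habs := abs_le.1 hSγ
  have hsinS1 : Real.sin γ ≤ (3/2)*S := by linarith
  have hS1 : S ≤ (3/2)*Real.sin γ := by linarith
  have h1y : 1 - ‖y‖^2 = Real.sin γ^2 - Q := by rw [hsin2]; linarith
  have hQsin : Q ≤ Real.sin γ^2 / 4 := arithB hr0 hsγ_lb hQle
  have hS0 : 0 ≤ S := by linarith
  have hlow : S^2/3 ≤ 1 - ‖y‖^2 := by
    rw [h1y]; exact arithC hS1 hQsin hS0
  have hupp : 1 - ‖y‖^2 ≤ 4*S^2 := by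
    rw [h1y]; exact arithD hsinS1 hQ0 hsinγ0
  have hy1 : ‖y‖ ≤ 1 := arithE hlow (norm_nonneg y)
  refine ⟨⟨mem_closedBall_zero_iff.2 hy1, ?_⟩, hlow, hupp⟩
  -- now rho x y < r
  have hinner : (inner ℝ x y : ℝ) = s * p := by
    rw [hb, real_inner_smul_left, hp, OrthonormalBasis.repr_apply_apply]
  have hsx : Real.sqrt (1 - ‖x‖^2) = Real.sin α := by
    rw [hα, Real.sin_arccos]
  have hsα : s = Real.cos α := (Real.cos_arccos (by linarith) hx).symm
  have hsinα0 : 0 ≤ Real.sin α := Real.sin_nonneg_of_nonneg_of_le_pi hα0 (by linarith)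
  have hsqrt_y : Real.sin γ - Q/Real.sin γ ≤ Real.sqrt (1 - ‖y‖^2) := by
    rw [h1y]
    exact sqrt_lb hsinγ0 hQ0 (by linarith [sq_nonneg (Real.sin γ)])
  have hsinα_le : Real.sin α ≤ 2 * Real.sin γ := by
    rcases le_total γ (π/2) with hc | hc
    · have h1 : Real.sin γ - Real.sin α = 2 * Real.sin ((γ-α)/2) * Real.cos ((γ+α)/2) :=
        Real.sin_sub_sin γ α
      have h2 : 0 ≤ Real.sin ((γ-α)/2) :=
        Real.sin_nonneg_of_nonneg_of_le_pi (by linarith) (by linarith)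
      have h3 : 0 ≤ Real.cos ((γ+α)/2) :=
        Real.cos_nonneg_of_mem_Icc ⟨by linarith, by linarith⟩
      exact arithF h1 h2 h3 hsinγ0
    · have hmin : 1 ≤ min γ (π - γ) := le_min (by linarith) (by linarith)
      have := jordanMin hγ0 hγπ
      have h4 : Real.sin α ≤ 1 := Real.sin_le_one α
      linarith
  have hsinγpos : 0 < Real.sin γ := by linarith
  have hDQ : Real.sin γ * (Q / Real.sin γ) = Q := mul_div_cancel₀ Q (ne_of_gt hsinγpos)
  have hD0 : 0 ≤ Q / Real.sin γ := div_nonneg hQ0 hsinγ0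
  have hcos_lb : Real.cos (γ - α) - 2*Q ≤ s*p + Real.sqrt (1-‖x‖^2) * Real.sqrt (1-‖y‖^2) := by
    rw [hsx, Real.cos_sub]
    have e1 : Real.sin α * (Real.sin γ - Q/Real.sin γ) ≤ Real.sin α * Real.sqrt (1-‖y‖^2) :=
      mul_le_mul_of_nonneg_left hsqrt_y hsinα0
    have e2 : Real.sin α * (Q / Real.sin γ) ≤ 2 * Real.sin γ * (Q / Real.sin γ) :=
      mul_le_mul_of_nonneg_right hsinα_le hD0
    have e3 : 2 * Real.sin γ * (Q / Real.sin γ) = 2 * Q := by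
      rw [mul_assoc, hDQ]
    have e4 : s * p = Real.cos γ * Real.cos α := by rw [hsα, hpγ]; ring
    rw [mul_sub] at e1
    linarith [e1, e2, e3, e4]
  have hΔu : γ - α ≤ 3*r/8 := by linarith
  have hΔl : 0 ≤ γ - α := by linarith
  have hgap : r^2/32 ≤ Real.cos (γ - α) - Real.cos r := by
    set Δ : ℝ := γ - α with hΔ
    have hcc : Real.cos Δ - Real.cos r = 2 * Real.sin ((Δ+r)/2) * Real.sin ((r-Δ)/2) := by
      rw [Real.cos_sub_cos]
      have : Real.sin ((Δ - r)/2) = - Real.sin ((r-Δ)/2) := by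
        rw [← Real.sin_neg]; ring_nf
      rw [this]; ring
    have s1 : r/8 ≤ Real.sin ((Δ+r)/2) := by
      have h0' : 0 ≤ (Δ+r)/2 := by linarith
      have h1' : (Δ+r)/2 ≤ π := by linarith
      have hmin : r/4 ≤ min ((Δ+r)/2) (π - (Δ+r)/2) := le_min (by linarith) (by linarith)
      have := jordanMin h0' h1'
      linarith
    have s2 : r/8 ≤ Real.sin ((r-Δ)/2) := by
      have h0' : 0 ≤ (r-Δ)/2 := by linarith
      have h1' : (r-Δ)/2 ≤ π := by linarith
      have hmin : r/4 ≤ min ((r-Δ)/2) (π - (r-Δ)/2) := le_min (by linarith) (by linarith)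
      have := jordanMin h0' h1'
      linarith
    rw [hcc]
    exact arithG s1 s2 hr0.le
  have hfinal : Real.cos r < (inner ℝ x y : ℝ) + Real.sqrt (1-‖x‖^2) * Real.sqrt (1-‖y‖^2) := by
    rw [hinner]
    have hr2 : 0 < r^2 := pow_pos hr0 2
    linarith [hcos_lb, hgap, hQle]
  show rho x y < r
  rw [rho]
  rcases le_or_gt 1 ((inner ℝ x y : ℝ) + Real.sqrt (1-‖x‖^2) * Real.sqrt (1-‖y‖^2)) with hc | hc
  · rw [Real.arccos_of_one_le hc]; exact hr0
  · by_contra hcon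
    push_neg at hcon
    have hm1 : (-1:ℝ) ≤ (inner ℝ x y : ℝ) + Real.sqrt (1-‖x‖^2) * Real.sqrt (1-‖y‖^2) :=
      le_trans (Real.neg_one_le_cos r) (le_of_lt hfinal)
    have harcmem : Real.arccos ((inner ℝ x y : ℝ) + Real.sqrt (1-‖x‖^2) * Real.sqrt (1-‖y‖^2)) ∈ Set.Icc 0 π :=
      ⟨Real.arccos_nonneg _, Real.arccos_le_pi _⟩
    have hrmem : r ∈ Set.Icc (0:ℝ) π := ⟨hr0.le, hrπ.le⟩
    have := Real.strictAntiOn_cos.antitoneOn hrmem harcmem hcon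
    rw [Real.cos_arccos hm1 hc.le] at this
    linarith

lemma exists_onb (n : ℕ) (hn : 1 ≤ n) (x : E n) :
    ∃ b : OrthonormalBasis (Fin n) ℝ (E n), x = ‖x‖ • b ⟨0, hn⟩ := by
  by_cases hx : x = 0
  · exact ⟨EuclideanSpace.basisFun (Fin n) ℝ, by simp [hx]⟩
  · set u : E n := ‖x‖⁻¹ • x with hu
    have hnorm : ‖u‖ = 1 := by
      rw [hu, norm_smul, norm_inv, norm_norm, inv_mul_cancel₀ (norm_ne_zero_iff.2 hx)]
    have horth : Orthonormal ℝ (Set.restrict {(⟨0, hn⟩ : Fin n)} (fun _ : Fin n => u)) := by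
      constructor
      · intro i; exact hnorm
      · intro i j hij
        have hi : (i : Fin n) = ⟨0, hn⟩ := i.2
        have hj : (j : Fin n) = ⟨0, hn⟩ := j.2
        exact absurd (Subtype.ext (hi.trans hj.symm)) hij
    have hcard : Module.finrank ℝ (E n) = Fintype.card (Fin n) := by simp
    obtain ⟨b, hb⟩ := horth.exists_orthonormalBasis_extension_of_card_eq hcard
    refine ⟨b, ?_⟩
    rw [hb ⟨0, hn⟩ (Set.mem_singleton _), hu, smul_smul,
      mul_inv_cancel₀ (norm_ne_zero_iff.2 hx), one_smul]

noncomputable def Kc (a : ℝ) : ℝ := min ((1/3:ℝ) ^ (a - 1/2)) ((4:ℝ) ^ (a - 1/2))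

lemma Kc_pos (a : ℝ) : 0 < Kc a :=
  lt_min (Real.rpow_pos_of_pos (by norm_num) _) (Real.rpow_pos_of_pos (by norm_num) _)

lemma density_lb {a S t : ℝ} (hS : 0 < S) (h1 : S^2/3 ≤ t) (h2 : t ≤ 4*S^2) :
    Kc a * S ^ (2*a-1) ≤ t ^ (a-1/2) := by
  have ht0 : 0 < t := lt_of_lt_of_le (by positivity) h1
  have hSpow : S ^ (2*a-1) = (S^2) ^ (a-1/2) := by
    rw [← Real.rpow_two, ← Real.rpow_mul hS.le]
    ring_nf
  rcases le_total (1/2 : ℝ) a with hha | hha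
  · have he : (0:ℝ) ≤ a - 1/2 := by linarith
    calc Kc a * S ^ (2*a-1) ≤ (1/3:ℝ)^(a-1/2) * (S^2)^(a-1/2) := by
          rw [hSpow]
          exact mul_le_mul_of_nonneg_right (min_le_left _ _) (Real.rpow_nonneg (by positivity) _)
      _ = (S^2/3) ^ (a-1/2) := by
          rw [← Real.mul_rpow (by norm_num) (by positivity)]
          ring_nf
      _ ≤ t ^ (a-1/2) := Real.rpow_le_rpow (by positivity) h1 he
  · have he : a - 1/2 ≤ 0 := by linarith
    calc Kc a * S ^ (2*a-1) ≤ (4:ℝ)^(a-1/2) * (S^2)^(a-1/2) := by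
          rw [hSpow]
          exact mul_le_mul_of_nonneg_right (min_le_right _ _) (Real.rpow_nonneg (by positivity) _)
      _ = (4*S^2) ^ (a-1/2) := by
          rw [← Real.mul_rpow (by norm_num) (by positivity)]
      _ ≤ t ^ (a-1/2) := Real.rpow_le_rpow_of_nonpos ht0 h2 he

lemma S_lb (n : ℕ) (x : E n) (r : ℝ) (hx : ‖x‖ ≤ 1) (hr0 : 0 < r) (hrπ : r < π) :
    r/8 ≤ Real.sin (min (Real.arccos ‖x‖ + r/4) (π/2) + r/16) := by
  have hπ4 : π ≤ 4 := Real.pi_le_four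
  have hα0 : 0 ≤ Real.arccos ‖x‖ := Real.arccos_nonneg _
  set β : ℝ := min (Real.arccos ‖x‖ + r/4) (π/2) with hβ
  have hβl : r/4 ≤ β := le_min (by linarith) (by linarith)
  have hβu : β ≤ π/2 := min_le_right _ _
  have h0θ : 0 ≤ β + r/16 := by linarith
  have h1θ : β + r/16 ≤ π := by linarith
  have hmin : r/4 ≤ min (β + r/16) (π - (β + r/16)) := le_min (by linarith) (by linarith)
  have := jordanMin h0θ h1θ
  linarith

lemma key (n : ℕ) (hn : 1 ≤ n) (a : ℝ) (x : E n) (hx : ‖x‖ ≤ 1)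
    (r : ℝ) (hr0 : 0 < r) (hrπ : r < π) :
    ENNReal.ofReal (Kc a * (Real.sin (min (Real.arccos ‖x‖ + r/4) (π/2) + r/16)) ^ (2*a-1)
      * ((Real.sin (min (Real.arccos ‖x‖ + r/4) (π/2) + r/16)) * r / 16)
      * (r/(8*n))^(n-1))
      ≤ muA n a (rhoBall x r) := by
  have hπ4 : π ≤ 4 := Real.pi_le_four
  obtain ⟨b, hb⟩ := exists_onb n hn x
  set i0 : Fin n := ⟨0, hn⟩ with hi0
  set β : ℝ := min (Real.arccos ‖x‖ + r/4) (π/2) with hβ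
  set S : ℝ := Real.sin (β + r/16) with hS
  have hSlb : r/8 ≤ S := S_lb n x r hx hr0 hrπ
  have hSpos : 0 < S := lt_of_lt_of_le (by linarith) hSlb
  set lo : Fin n → ℝ := fun i => if i = i0 then Real.cos (β + r/8) else -(r/(16*n)) with hlo
  set hi : Fin n → ℝ := fun i => if i = i0 then Real.cos β else r/(16*n) with hhi
  set PiBox : Set (Fin n → ℝ) := Set.univ.pi fun i => Set.Icc (lo i) (hi i) with hPiBox
  set m : E n ≃ᵐ (Fin n → ℝ) :=
    b.measurableEquiv.trans (MeasurableEquiv.toLp 2 (Fin n → ℝ)).symm with hm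
  have hmp : MeasurePreserving m volume volume :=
    (EuclideanSpace.volume_preserving_symm_measurableEquiv_toLp (Fin n)).comp
      b.measurePreserving_measurableEquiv
  set T : Set (E n) := m ⁻¹' PiBox with hT
  have hPiBoxm : MeasurableSet PiBox := MeasurableSet.univ_pi fun i => measurableSet_Icc
  have hTm : MeasurableSet T := hPiBoxm.preimage m.measurable
  have hmy : ∀ (y : E n) (i : Fin n), m y i = b.repr y i := fun y i => rfl
  -- membership consequences
  have hmemT : ∀ y ∈ T, y ∈ rhoBall x r ∧ S^2/3 ≤ 1 - ‖y‖^2 ∧ 1 - ‖y‖^2 ≤ 4*S^2 := by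
    intro y hy
    rw [hT, Set.mem_preimage, hPiBox, Set.mem_univ_pi] at hy
    apply mem_est n hn x hx r hr0 hrπ b hb y
    · have := hy i0
      rw [hmy] at this
      simpa [hlo, hhi] using this
    · intro i hii0
      have := hy i
      rw [hmy] at this
      rw [hlo, hhi] at this
      simp only [if_neg hii0] at this
      exact abs_le.2 ⟨le_trans (le_of_eq (if_neg hii0).symm) this.1, le_trans this.2 (le_of_eq (if_neg hii0))⟩
  have hTsub : T ⊆ rhoBall x r := fun y hy => (hmemT y hy).1
  have hTC : T ⊆ closedBall (0 : E n) 1 := fun y hy => (hmemT y hy).1.1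
  -- measure computation
  have hmono := measure_mono (μ := muA n a) hTsub
  refine le_trans ?_ hmono
  rw [muA, withDensity_apply _ hTm, Measure.restrict_restrict hTm,
    Set.inter_eq_self_of_subset_left hTC]
  have hgmeas : Measurable fun y : E n => ENNReal.ofReal ((1 - ‖y‖^2) ^ (a - 1/2)) := by
    apply Measurable.ennreal_ofReal
    exact (measurable_const.sub ((measurable_norm).pow_const 2)).pow measurable_const
  have hlower : ENNReal.ofReal (Kc a * S ^ (2*a-1)) * volume T
      ≤ ∫⁻ y in T, ENNReal.ofReal ((1 - ‖y‖^2) ^ (a - 1/2)) ∂volume := by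
    rw [← setLIntegral_const T _]
    apply setLIntegral_mono hgmeas
    intro y hy
    apply ENNReal.ofReal_le_ofReal
    exact density_lb hSpos (hmemT y hy).2.1 (hmemT y hy).2.2
  refine le_trans ?_ hlower
  -- compute volume T
  have hvolT : volume T = ENNReal.ofReal (Real.cos β - Real.cos (β + r/8))
      * ENNReal.ofReal (r/(8*n)) ^ (n-1) := by
    rw [hT, hmp.measure_preimage hPiBoxm.nullMeasurableSet, hPiBox, volume_pi_pi]
    have hstep : ∀ i : Fin n, volume (Set.Icc (lo i) (hi i)) = ENNReal.ofReal (hi i - lo i) :=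
      fun i => Real.volume_Icc
    simp_rw [hstep]
    rw [← Finset.mul_prod_erase Finset.univ _ (Finset.mem_univ i0)]
    have h1 : hi i0 - lo i0 = Real.cos β - Real.cos (β + r/8) := by
      rw [hlo, hhi]; simp
    have h2 : ∀ i ∈ Finset.univ.erase i0, ENNReal.ofReal (hi i - lo i)
        = ENNReal.ofReal (r/(8*n)) := by
      intro i hi'
      have hne : i ≠ i0 := Finset.ne_of_mem_erase hi'
      rw [hlo, hhi]
      simp only [if_neg hne, sub_neg_eq_add]
      congr 1
      have hn0 : (n:ℝ) ≠ 0 := Nat.cast_ne_zero.2 (by omega)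
      field_simp
      ring
    rw [Finset.prod_congr rfl h2, Finset.prod_const, h1,
      Finset.card_erase_of_mem (Finset.mem_univ i0), Finset.card_univ, Fintype.card_fin]
  rw [hvolT]
  -- lower bound on the length
  have hL : S * r / 16 ≤ Real.cos β - Real.cos (β + r/8) := by
    have hcc : Real.cos β - Real.cos (β + r/8) = 2 * S * Real.sin (r/16) := by
      rw [Real.cos_sub_cos]
      have e1 : (β + (β + r/8))/2 = β + r/16 := by ring
      have e2 : (β - (β + r/8))/2 = -(r/16) := by ring
      rw [e1, e2, Real.sin_neg, hS]
      ring
    have hs16 : r/32 ≤ Real.sin (r/16) := by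
      have h0' : 0 ≤ r/16 := by linarith
      have h1' : r/16 ≤ π := by linarith
      have hmin : r/16 ≤ min (r/16) (π - (r/16)) := le_min (by linarith) (by linarith)
      have := jordanMin h0' h1'
      linarith
    rw [hcc]
    calc S * r / 16 = S * (2 * (r/32)) := by ring
      _ ≤ S * (2 * Real.sin (r/16)) := by
          apply mul_le_mul_of_nonneg_left _ hSpos.le
          linarith
      _ = 2 * S * Real.sin (r/16) := by ring
  -- assemble
  have hKS : 0 ≤ Kc a * S ^ (2*a-1) :=
    mul_nonneg (Kc_pos a).le (Real.rpow_nonneg hSpos.le _)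
  have hSr : 0 ≤ S * r / 16 := by positivity
  have hrn : 0 ≤ r/(8*(n:ℝ)) := by positivity
  calc ENNReal.ofReal (Kc a * S ^ (2*a-1) * (S * r / 16) * (r/(8*n))^(n-1))
      = ENNReal.ofReal (Kc a * S ^ (2*a-1)) * ENNReal.ofReal (S * r / 16)
        * ENNReal.ofReal (r/(8*n)) ^ (n-1) := by
        rw [ENNReal.ofReal_mul (mul_nonneg hKS hSr), ENNReal.ofReal_mul hKS,
          ENNReal.ofReal_pow hrn]
    _ ≤ ENNReal.ofReal (Kc a * S ^ (2*a-1)) * ENNReal.ofReal (Real.cos β - Real.cos (β + r/8))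
        * ENNReal.ofReal (r/(8*n)) ^ (n-1) := by
        gcongr
        all_goals first | exact ENNReal.ofReal_le_ofReal hL | skip
    _ = ENNReal.ofReal (Kc a * S ^ (2*a-1)) * (ENNReal.ofReal (Real.cos β - Real.cos (β + r/8))
        * ENNReal.ofReal (r/(8*n)) ^ (n-1)) := by ring

lemma S_ge_half (n : ℕ) (x : E n) (r : ℝ) (hx : ‖x‖ ≤ 1/2) (hr0 : 0 < r) (hrπ : r < π) :
    1/2 ≤ Real.sin (min (Real.arccos ‖x‖ + r/4) (π/2) + r/16) := by
  have hπ4 : π ≤ 4 := Real.pi_le_four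
  have hπ3 : 3 < π := Real.pi_gt_three
  have hα : π/3 ≤ Real.arccos ‖x‖ := by
    have h1 : Real.arccos (1/2) ≤ Real.arccos ‖x‖ := by
      rw [Real.arccos_eq_pi_div_two_sub_arcsin, Real.arccos_eq_pi_div_two_sub_arcsin]
      linarith [Real.monotone_arcsin hx]
    have h2 : Real.arccos (1/2) = π/3 := by
      rw [show (1/2 : ℝ) = Real.cos (π/3) by rw [Real.cos_pi_div_three]]
      exact Real.arccos_cos (by positivity) (by linarith)
    linarith
  set β : ℝ := min (Real.arccos ‖x‖ + r/4) (π/2) with hβ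
  have hβl : π/3 ≤ β := le_min (by linarith) (by linarith)
  have hβu : β ≤ π/2 := min_le_right _ _
  have h0θ : 0 ≤ β + r/16 := by linarith
  have h1θ : β + r/16 ≤ π := by linarith
  have hmin : 1 ≤ min (β + r/16) (π - (β + r/16)) := le_min (by linarith) (by linarith)
  have := jordanMin h0θ h1θ
  linarith


/-- lower bounds for the `μ_a`-measure of anisotropic balls:
`μ_a(B_ρ(x,r)) ≥ c r^{n+2a}` if `|x| > 1/2` and `μ_a(B_ρ(x,r)) ≥ c rⁿ` if `|x| ≤ 1/2`. -/
theorem stmt4 (n : ℕ) (hn : 1 ≤ n) (a : ℝ) (ha : 0 ≤ a) :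
    ∃ c : ℝ, 0 < c ∧
      ∀ x ∈ closedBall (0 : E n) 1, ∀ r : ℝ, 0 < r → r < π →
        (1/2 < ‖x‖ → ENNReal.ofReal (c * r^((n : ℝ) + 2*a)) ≤ muA n a (rhoBall x r)) ∧
        (‖x‖ ≤ 1/2 → ENNReal.ofReal (c * r^n) ≤ muA n a (rhoBall x r)) := by
  have hB : (0:ℝ) < (8*(n:ℝ))^(n-1) := by
    have : (0:ℝ) < (n:ℝ) := by exact_mod_cast hn
    positivity
  set B : ℝ := (8*(n:ℝ))^(n-1) with hBdef
  set c : ℝ := Kc a * (1/8:ℝ)^(2*a) / (16 * B) with hc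
  have hc0 : 0 < c := by
    apply div_pos (mul_pos (Kc_pos a) (Real.rpow_pos_of_pos (by norm_num) _))
    positivity
  refine ⟨c, hc0, ?_⟩
  intro x hx r hr0 hrπ
  have hx1 : ‖x‖ ≤ 1 := mem_closedBall_zero_iff.1 hx
  have hkey := key n hn a x hx1 r hr0 hrπ
  set S : ℝ := Real.sin (min (Real.arccos ‖x‖ + r/4) (π/2) + r/16) with hSdef
  have hSlb : r/8 ≤ S := S_lb n x r hx1 hr0 hrπ
  have hSpos : 0 < S := lt_of_lt_of_le (by linarith) hSlb
  have h2a : (0:ℝ) ≤ 2*a := by linarith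
  have hrn' : r^(n-1) * r = r^n := by
    rw [← pow_succ]
    congr 1
    omega
  have hsplitS : S^(2*a) = S^(2*a-1) * S := by
    rw [show (2*a:ℝ) = (2*a-1)+1 by ring, Real.rpow_add hSpos, Real.rpow_one]
    norm_num
  have hdivpow : (r/(8*(n:ℝ)))^(n-1) = r^(n-1) / B := by
    rw [div_pow]
  have hRHS : Kc a * S^(2*a-1) * (S * r / 16) * (r/(8*(n:ℝ)))^(n-1)
      = Kc a * S^(2*a) * r * r^(n-1) / (16 * B) := by
    rw [hsplitS, hdivpow]
    field_simp
  constructor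
  · intro _
    refine le_trans (ENNReal.ofReal_le_ofReal ?_) hkey
    have hrpow : r^((n:ℝ) + 2*a) = r^n * r^(2*a) := by
      rw [Real.rpow_add hr0, Real.rpow_natCast]
    have hA : (1/8:ℝ)^(2*a) * r^(2*a) = (r/8)^(2*a) := by
      rw [← Real.mul_rpow (by norm_num) hr0.le]
      ring_nf
    have hAS : (r/8:ℝ)^(2*a) ≤ S^(2*a) :=
      Real.rpow_le_rpow (by positivity) hSlb h2a
    rw [hRHS]
    calc c * r^((n:ℝ) + 2*a)
        = Kc a * ((1/8:ℝ)^(2*a) * r^(2*a)) * r * r^(n-1) / (16 * B) := by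
          rw [hrpow, ← hrn', hc]
          ring
      _ = Kc a * (r/8)^(2*a) * r * r^(n-1) / (16 * B) := by rw [hA]
      _ ≤ Kc a * S^(2*a) * r * r^(n-1) / (16 * B) := by
          gcongr
          exact (Kc_pos a).le
  · intro hhalf
    refine le_trans (ENNReal.ofReal_le_ofReal ?_) hkey
    have hShalf : 1/2 ≤ S := S_ge_half n x r hhalf hr0 hrπ
    have hA2 : (1/8:ℝ)^(2*a) ≤ (1/2:ℝ)^(2*a) :=
      Real.rpow_le_rpow (by norm_num) (by norm_num) h2a
    have hAS : (1/2:ℝ)^(2*a) ≤ S^(2*a) :=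
      Real.rpow_le_rpow (by norm_num) hShalf h2a
    rw [hRHS]
    calc c * r^n
        = Kc a * (1/8:ℝ)^(2*a) * r * r^(n-1) / (16 * B) := by
          rw [← hrn', hc]
          ring
      _ ≤ Kc a * S^(2*a) * r * r^(n-1) / (16 * B) := by
          have hXY : (1/8:ℝ)^(2*a) ≤ S^(2*a) := le_trans hA2 hAS
          gcongr
          exact (Kc_pos a).le
end
end

section
/- Let H be a finite-dimensional reproducing kernel Hilbert space of functions on a set X with kernel K, let Λ ⊂ X be finite with K(λ,λ) > 0 for all λ ∈ Λ, and suppose the normalized kernels κ_λ = K(λ,·)/√(K(λ,λ)) form a Riesz sequence with lower bound 1/C, i.e. (1/C)·Σ|c_λ|² ≤ ‖Σ c_λ κ_λ‖². Then for any values (v_λ)_{λ∈Λ} there exists f in the span of {κ_λ} with f(λ)/√(K(λ,λ)) = v_λ for all λ ∈ Λ and ‖f‖² ≤ C·Σ|v_λ|². -/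
open scoped BigOperators InnerProductSpace

/-!
The Gram operator `c ↦ (⟪κ j, ∑ i, c i • κ i⟫)_j` of a finite family `κ` is injective under a
lower Riesz bound, since `‖∑ i, c i • κ i‖² = ∑ j, c j ⟪κ j, ∑ i, c i • κ i⟫`; being an
endomorphism of a finite-dimensional space it is then surjective, which solves the moment
problem. If `c` solves it with data `v`, the same identity, Cauchy–Schwarz and the Riesz bound
give `‖f‖⁴ ≤ (∑ c²)(∑ v²) ≤ C ‖f‖² ∑ v²` for `f = ∑ i, c i • κ i`.
-/

section LowerRiesz

variable {ι H : Type*} [Fintype ι] [NormedAddCommGroup H] [InnerProductSpace ℝ H]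

noncomputable def gramMap (κ : ι → H) : (ι → ℝ) →ₗ[ℝ] ι → ℝ :=
  LinearMap.pi (fun j => (innerSL ℝ (κ j) : H →ₗ[ℝ] ℝ)) ∘ₗ Fintype.linearCombination ℝ κ

theorem gramMap_apply (κ : ι → H) (c : ι → ℝ) (j : ι) :
    gramMap κ c j = ⟪κ j, ∑ i, c i • κ i⟫_ℝ := by
  simp [gramMap, Fintype.linearCombination_apply, inner_sum, real_inner_smul_right]

theorem norm_sum_smul_sq_eq_sum_mul_gramMap (κ : ι → H) (c : ι → ℝ) :
    ‖∑ i, c i • κ i‖ ^ 2 = ∑ j, c j * gramMap κ c j := by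
  simp only [gramMap_apply, ← real_inner_self_eq_norm_sq, sum_inner, real_inner_smul_left]

variable {κ : ι → H} {C : ℝ}

theorem gramMap_injective (hRiesz : ∀ c : ι → ℝ, ∑ i, c i ^ 2 ≤ C * ‖∑ i, c i • κ i‖ ^ 2) :
    Function.Injective (gramMap κ) := by
  rw [← LinearMap.ker_eq_bot, LinearMap.ker_eq_bot']
  intro c hc
  have hnorm : ‖∑ i, c i • κ i‖ ^ 2 = 0 := by
    simp [norm_sum_smul_sq_eq_sum_mul_gramMap, hc]
  have hsum : ∑ i, c i ^ 2 = 0 :=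
    le_antisymm (by simpa [hnorm] using hRiesz c) (by positivity)
  funext i
  exact pow_eq_zero_iff two_ne_zero |>.mp <|
    (Finset.sum_eq_zero_iff_of_nonneg fun i _ => sq_nonneg (c i)).mp hsum i (Finset.mem_univ i)

theorem norm_sum_smul_sq_le_of_gramMap_eq (hC : 0 ≤ C)
    (hRiesz : ∀ c : ι → ℝ, ∑ i, c i ^ 2 ≤ C * ‖∑ i, c i • κ i‖ ^ 2)
    {c v : ι → ℝ} (hcv : gramMap κ c = v) :
    ‖∑ i, c i • κ i‖ ^ 2 ≤ C * ∑ i, v i ^ 2 := by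
  set N := ‖∑ i, c i • κ i‖ ^ 2
  have hN : N = ∑ i, c i * v i := hcv ▸ norm_sum_smul_sq_eq_sum_mul_gramMap κ c
  have hNN : N * N ≤ N * (C * ∑ i, v i ^ 2) :=
    calc N * N = (∑ i, c i * v i) ^ 2 := by rw [hN, sq]
      _ ≤ (∑ i, c i ^ 2) * ∑ i, v i ^ 2 := Finset.sum_mul_sq_le_sq_mul_sq _ _ _
      _ ≤ (C * N) * ∑ i, v i ^ 2 := mul_le_mul_of_nonneg_right (hRiesz c) (by positivity)
      _ = N * (C * ∑ i, v i ^ 2) := by ring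
  have hN0 : 0 ≤ N := sq_nonneg _
  rcases hN0.eq_or_lt with h0 | h0
  · rw [← h0]
    positivity
  · exact le_of_mul_le_mul_left hNN h0

theorem exists_gramMap_eq_and_norm_sum_smul_sq_le (hC : 0 ≤ C)
    (hRiesz : ∀ c : ι → ℝ, ∑ i, c i ^ 2 ≤ C * ‖∑ i, c i • κ i‖ ^ 2) (v : ι → ℝ) :
    ∃ c : ι → ℝ, gramMap κ c = v ∧ ‖∑ i, c i • κ i‖ ^ 2 ≤ C * ∑ i, v i ^ 2 := by
  obtain ⟨c, hc⟩ := LinearMap.injective_iff_surjective.mp (gramMap_injective hRiesz) v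
  exact ⟨c, hc, norm_sum_smul_sq_le_of_gramMap_eq hC hRiesz hc⟩

end LowerRiesz

theorem stmt7_general {H X : Type*} [NormedAddCommGroup H] [InnerProductSpace ℝ H]
    (Φ : X → H) (K : X → X → ℝ)
    (Λ : Finset X)
    (C : ℝ) (hC : 0 < C)
    (hRiesz : ∀ c : X → ℝ,
      (1 / C) * ∑ l ∈ Λ, (c l)^2
        ≤ ‖∑ l ∈ Λ, c l • ((Real.sqrt (K l l))⁻¹ • Φ l)‖^2) :
    ∀ v : X → ℝ, ∃ f : H,
      f ∈ Submodule.span ℝ ((fun l => (Real.sqrt (K l l))⁻¹ • Φ l) '' (Λ : Set X)) ∧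
      (∀ l ∈ Λ, (inner ℝ f (Φ l) : ℝ) / Real.sqrt (K l l) = v l) ∧
      ‖f‖^2 ≤ C * ∑ l ∈ Λ, (v l)^2 := by
  intro v
  set κ : X → H := fun l => (Real.sqrt (K l l))⁻¹ • Φ l
  have hRieszΛ : ∀ c : Λ → ℝ, ∑ μ, c μ ^ 2 ≤ C * ‖∑ μ, c μ • κ μ‖ ^ 2 := by
    intro c
    have h := hRiesz (Function.extend Subtype.val c 0)
    simp only [← Finset.sum_coe_sort Λ, Subtype.val_injective.extend_apply] at h
    rwa [one_div_mul_eq_div, div_le_iff₀' hC] at h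
  obtain ⟨c, hcv, hnorm⟩ :=
    exists_gramMap_eq_and_norm_sum_smul_sq_le hC.le hRieszΛ (fun μ => v μ)
  refine ⟨∑ μ, c μ • κ μ, ?_, fun l hl => ?_, ?_⟩
  · exact Submodule.sum_mem _ fun μ _ =>
      Submodule.smul_mem _ _ (Submodule.subset_span ⟨μ, μ.2, rfl⟩)
  · rw [← congrFun hcv ⟨l, hl⟩, gramMap_apply]
    simp only [κ, real_inner_smul_left, real_inner_comm, div_eq_inv_mul]
  · rwa [Finset.sum_coe_sort Λ (fun l => v l ^ 2)] at hnorm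

/-- in a finite-dimensional RKHS (with kernel `K x y = ⟨Φ x, Φ y⟩`, evaluation
`f(x) = ⟨f, Φ x⟩`), if the normalized kernels `κ_λ = Φ λ / √(K λ λ)`, `λ ∈ Λ`, satisfy the
lower Riesz bound `(1/C) Σ c_λ² ≤ ‖Σ c_λ κ_λ‖²`, then every moment problem
`f(λ)/√(K λ λ) = v_λ` is solvable with `f` in the span of the `κ_λ`'s
and `‖f‖² ≤ C Σ v_λ²`. -/
theorem stmt7 {H X : Type*} [NormedAddCommGroup H] [InnerProductSpace ℝ H]
    [FiniteDimensional ℝ H]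
    (Φ : X → H) (K : X → X → ℝ) (hK : ∀ x y, K x y = (inner ℝ (Φ x) (Φ y) : ℝ))
    (Λ : Finset X) (hpos : ∀ l ∈ Λ, 0 < K l l)
    (C : ℝ) (hC : 0 < C)
    (hRiesz : ∀ c : X → ℝ,
      (1 / C) * ∑ l ∈ Λ, (c l)^2
        ≤ ‖∑ l ∈ Λ, c l • ((Real.sqrt (K l l))⁻¹ • Φ l)‖^2) :
    ∀ v : X → ℝ, ∃ f : H,
      f ∈ Submodule.span ℝ ((fun l => (Real.sqrt (K l l))⁻¹ • Φ l) '' (Λ : Set X)) ∧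
      (∀ l ∈ Λ, (inner ℝ f (Φ l) : ℝ) / Real.sqrt (K l l) = v l) ∧
      ‖f‖^2 ≤ C * ∑ l ∈ Λ, (v l)^2 :=
  stmt7_general Φ K Λ C hC hRiesz
end

section
/- Let {X_k} be a sequence of uniformly separated subsets of ℝ^n (|λ−λ'| ≥ δ for distinct points of X_k, with δ independent of k) such that for some M_0 and all M ≥ M_0, #(X_k ∩ B(0,M)) ≥ c·M^n for all large k. Then there exists a nonempty (indeed infinite) set X ⊂ ℝ^n, uniformly separated with constant δ, that is a weak limit of a subsequence of {X_k}: every point of X is a limit of points of the X_k and X satisfies #(X ∩ B(0,M)) ≥ c'·M^n for all large M. -/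
open MeasureTheory Metric Real
open scoped ENNReal BigOperators

noncomputable section

/-!
Enumerate the points of each `X k` in the ball of radius `m` by one finite index set for all `k`
(a `δ`-separated subset of a ball has boundedly many points). Pushed into the one-point
compactification, these countably many sequences have a common subsequence along which each of
them converges or escapes to infinity; `Y` is the set of the finite limits. Separation passes to
limits, and far along the subsequence every point of `X (φ j)` in a ball is `δ/2`-close to its
own limit in `Y`, which injects `X (φ j) ∩ ball 0 R` into `Y ∩ ball 0 (R + δ/2)`.
-/

open Filter Topology Set

section Counting

variable {α : Type*}

theorem Set.infinite_of_tendsto_atTop_le_ncard {ι : Type*} {l : Filter ι} [l.NeBot]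
    {Y : Set α} {S : ι → Set α} {f : ι → ℝ} (hf : Tendsto f l atTop)
    (h : ∀ᶠ i in l, f i ≤ (Y ∩ S i).ncard) : Y.Infinite := by
  intro hY
  obtain ⟨i, hfi, hi⟩ := ((hf.eventually_gt_atTop (Y.ncard : ℝ)).and h).exists
  have : ((Y ∩ S i).ncard : ℝ) ≤ Y.ncard := by
    exact_mod_cast ncard_le_ncard inter_subset_left hY
  linarith

theorem Set.Finite.exists_fin_enumeration {s A : Set α} (hs : s.Nonempty) (hA : A.Finite)
    (hAs : A ⊆ s) {N : ℕ} (hN : A.ncard ≤ N) :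
    ∃ g : Fin N → α, range g ⊆ s ∧ A ⊆ range g := by
  classical
  obtain ⟨x₀, hx₀⟩ := hs
  have := hA.fintype
  obtain ⟨e⟩ : Nonempty (A ↪ Fin N) := Function.Embedding.nonempty_of_card_le <| by
    rwa [Fintype.card_fin, ← Nat.card_eq_fintype_card, Nat.card_coe_set_eq]
  refine ⟨Function.extend e Subtype.val fun _ => x₀, ?_,
    fun a ha => ⟨e ⟨a, ha⟩, e.injective.extend_apply _ _ _⟩⟩
  rintro _ ⟨i, rfl⟩
  by_cases hi : ∃ a, e a = i
  · obtain ⟨a, rfl⟩ := hi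
    rw [e.injective.extend_apply]
    exact hAs a.2
  · rw [Function.extend_apply' _ _ _ hi]
    exact hx₀

end Counting

section Packing

variable {α : Type*} [PseudoMetricSpace α] {δ : ℝ}

theorem finite_and_ncard_le_of_forall_exists_dist_lt {A B : Set α}
    (hA : A.Pairwise (δ ≤ dist · ·)) (hB : B.Finite)
    (hAB : ∀ a ∈ A, ∃ b ∈ B, dist a b < δ / 2) : A.Finite ∧ A.ncard ≤ B.ncard := by
  choose! g hgB hg using hAB
  have hinj : InjOn g A := by
    intro a ha a' ha' hgaa'
    by_contra hne
    have h' := hg a' ha'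
    rw [← hgaa'] at h'
    linarith [hA ha ha' hne, hg a ha, dist_triangle_right a a' (g a)]
  exact ⟨Finite.of_injOn hgB hinj hB, ncard_le_ncard_of_injOn g hgB hinj hB⟩

theorem IsCompact.exists_ncard_le_of_pairwise_dist_le {K : Set α} (hK : IsCompact K)
    (hδ : 0 < δ) : ∃ N : ℕ, ∀ s ⊆ K, s.Pairwise (δ ≤ dist · ·) → s.Finite ∧ s.ncard ≤ N := by
  obtain ⟨t, -, ht, hcover⟩ := hK.finite_cover_balls (half_pos hδ)
  refine ⟨t.ncard, fun s hsK hs =>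
    finite_and_ncard_le_of_forall_exists_dist_lt hs ht fun a ha => ?_⟩
  simpa using hcover (hsK ha)

end Packing

section Limits

variable {α ι : Type*} [MetricSpace α] {l : Filter ι}

theorem le_dist_of_tendsto_of_pairwise [l.NeBot] {δ : ℝ} {S : ι → Set α}
    (hS : ∀ i, (S i).Pairwise (δ ≤ dist · ·)) {u v : ι → α} (hu : ∀ i, u i ∈ S i)
    (hv : ∀ i, v i ∈ S i) {x y : α} (hux : Tendsto u l (𝓝 x)) (hvy : Tendsto v l (𝓝 y))
    (hxy : x ≠ y) : δ ≤ dist x y := by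
  have hdist := hux.dist hvy
  refine ge_of_tendsto hdist ?_
  filter_upwards [hdist.eventually_const_lt (dist_pos.2 hxy)] with i hi
  exact hS i (hu i) (hv i) fun h => by simp [h] at hi

theorem eventually_mem_imp_exists_tendsto_dist_lt {u : ι → α}
    (hu : (∃ x, Tendsto u l (𝓝 x)) ∨ Tendsto u l (coclosedCompact α)) {K : Set α}
    (hK : IsCompact K) {ε : ℝ} (hε : 0 < ε) :
    ∀ᶠ i in l, u i ∈ K → ∃ x, Tendsto u l (𝓝 x) ∧ dist (u i) x < ε := by
  rcases hu with ⟨x, hx⟩ | hu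
  · filter_upwards [Metric.tendsto_nhds.1 hx ε hε] with i hi _ using ⟨x, hx, hi⟩
  · filter_upwards [hu (hK.compl_mem_coclosedCompact_of_isClosed hK.isClosed)] with i hi hiK
    exact absurd hiK hi

end Limits

instance OnePoint.firstCountableTopology_of_finiteDimensional {V : Type*}
    [NormedAddCommGroup V] [NormedSpace ℝ V] [FiniteDimensional ℝ V] :
    FirstCountableTopology (OnePoint V) :=
  let e : OnePoint V ≃ₜ sphere (0 : EuclideanSpace ℝ (Fin (Module.finrank ℝ V + 1))) 1 :=
    onePointEquivSphereOfFinrankEq (by simp)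
  e.isEmbedding.firstCountableTopology

theorem exists_subseq_tendsto_or_tendsto_coclosedCompact {X ι : Type*} [TopologicalSpace X]
    [FirstCountableTopology (OnePoint X)] [Countable ι] (f : ℕ → ι → X) :
    ∃ ψ : ℕ → ℕ, StrictMono ψ ∧ ∀ i, (∃ x, Tendsto (fun j => f (ψ j) i) atTop (𝓝 x)) ∨
      Tendsto (fun j => f (ψ j) i) atTop (coclosedCompact X) := by
  obtain ⟨L, ψ, hψ, hL⟩ := CompactSpace.tendsto_subseq fun k i => (f k i : OnePoint X)
  refine ⟨ψ, hψ, fun i => ?_⟩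
  have hLi := tendsto_pi_nhds.1 hL i
  generalize L i = z at hLi
  induction z using OnePoint.rec with
  | infty =>
    right
    rw [← OnePoint.comap_coe_nhds_infty, tendsto_comap_iff]
    exact hLi
  | coe x =>
    exact .inl ⟨x, OnePoint.isOpenEmbedding_coe.isEmbedding.tendsto_nhds_iff.2 hLi⟩

theorem exists_subseq_weakLimit {V : Type*} [NormedAddCommGroup V] [NormedSpace ℝ V]
    [FiniteDimensional ℝ V] {X : ℕ → Set V} {δ : ℝ} (hδ : 0 < δ)
    (hne : ∀ k, (X k).Nonempty) (hsep : ∀ k, (X k).Pairwise (δ ≤ dist · ·)) :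
    ∃ (Y : Set V) (φ : ℕ → ℕ), StrictMono φ ∧ Y.Pairwise (δ ≤ dist · ·) ∧
      (∀ x ∈ Y, ∃ s : ℕ → V, (∀ j, s j ∈ X (φ j)) ∧ Tendsto s atTop (𝓝 x)) ∧
      ∀ R : ℝ, ∀ᶠ j in atTop, (X (φ j) ∩ ball 0 R).ncard ≤ (Y ∩ ball 0 (R + δ / 2)).ncard := by
  choose N hN using fun m : ℕ =>
    (isCompact_closedBall (0 : V) m).exists_ncard_le_of_pairwise_dist_le hδ
  have hfin k m := hN m (X k ∩ closedBall 0 m) inter_subset_right ((hsep k).mono inter_subset_left)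
  choose g hgX hgcover using fun k m =>
    (hfin k m).1.exists_fin_enumeration (hne k) inter_subset_left (hfin k m).2
  have hgmem k m i : g k m i ∈ X k := hgX k m (mem_range_self i)
  obtain ⟨φ, hφ, hconv⟩ := exists_subseq_tendsto_or_tendsto_coclosedCompact
    fun k (p : Σ m, Fin (N m)) => g k p.1 p.2
  let Y := {x | ∃ p : Σ m, Fin (N m), Tendsto (fun j => g (φ j) p.1 p.2) atTop (𝓝 x)}
  have hYsep : Y.Pairwise (δ ≤ dist · ·) := by
    rintro x ⟨p, hx⟩ y ⟨q, hy⟩ hxy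
    exact le_dist_of_tendsto_of_pairwise (fun j => hsep (φ j)) (fun j => hgmem _ _ _)
      (fun j => hgmem _ _ _) hx hy hxy
  refine ⟨Y, φ, hφ, hYsep, fun x ⟨p, hx⟩ => ⟨_, fun j => hgmem _ _ _, hx⟩, fun R => ?_⟩
  obtain ⟨_, hNY⟩ :=
    (isCompact_closedBall (0 : V) (R + δ / 2)).exists_ncard_le_of_pairwise_dist_le hδ
  have hYfin := (hNY (Y ∩ ball 0 (R + δ / 2)) (inter_subset_right.trans ball_subset_closedBall)
    (hYsep.mono inter_subset_left)).1
  set m := ⌈R⌉₊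
  have hev : ∀ᶠ j in atTop, ∀ i : Fin (N m), g (φ j) m i ∈ closedBall 0 R →
      ∃ x, Tendsto (fun j' => g (φ j') m i) atTop (𝓝 x) ∧ dist (g (φ j) m i) x < δ / 2 :=
    eventually_all.2 fun i => eventually_mem_imp_exists_tendsto_dist_lt (hconv ⟨m, i⟩)
      (isCompact_closedBall 0 R) (half_pos hδ)
  filter_upwards [hev] with j hj
  refine (finite_and_ncard_le_of_forall_exists_dist_lt
    ((hsep _).mono inter_subset_left) hYfin ?_).2
  rintro a ⟨haX, haR⟩
  obtain ⟨i, rfl⟩ := hgcover (φ j) m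
    ⟨haX, closedBall_subset_closedBall (Nat.le_ceil R) (ball_subset_closedBall haR)⟩
  obtain ⟨x, hx, hdist⟩ := hj i (ball_subset_closedBall haR)
  refine ⟨x, ⟨⟨⟨m, i⟩, hx⟩, ?_⟩, hdist⟩
  rw [mem_ball] at haR ⊢
  linarith [dist_triangle_left x 0 (g (φ j) m i)]

/-- a sequence of uniformly `δ`-separated sets `X_k ⊂ ℝⁿ` with uniform lower
counting bound `#(X_k ∩ B(0,M)) ≥ c Mⁿ` (for `M ≥ M₀`, `k` large) has a subsequence
converging weakly to an infinite, uniformly `δ`-separated set `Y`: every point of `Y` is a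
limit of points of the `X_{φ(j)}`, and `Y` satisfies `#(Y ∩ B(0,M)) ≥ c' Mⁿ` for large `M`. -/
theorem stmt17 (n : ℕ) (hn : 1 ≤ n) (X : ℕ → Set (E n)) (δ : ℝ) (hδ : 0 < δ)
    (hsep : ∀ k, ∀ x ∈ X k, ∀ y ∈ X k, x ≠ y → δ ≤ dist x y)
    (c : ℝ) (hc : 0 < c) (M₀ : ℝ)
    (hcount : ∀ M : ℝ, M₀ ≤ M → ∃ k₀ : ℕ, ∀ k : ℕ, k₀ ≤ k →
      c * M^n ≤ ((X k ∩ Metric.ball 0 M).ncard : ℝ)) :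
    ∃ (Y : Set (E n)) (φ : ℕ → ℕ), StrictMono φ ∧ Y.Infinite ∧
      (∀ x ∈ Y, ∀ y ∈ Y, x ≠ y → δ ≤ dist x y) ∧
      (∀ x ∈ Y, ∃ s : ℕ → E n, (∀ j, s j ∈ X (φ j)) ∧
        Filter.Tendsto s Filter.atTop (nhds x)) ∧
      (∃ c' : ℝ, 0 < c' ∧ ∃ M₁ : ℝ, ∀ M : ℝ, M₁ ≤ M →
        c' * M^n ≤ ((Y ∩ Metric.ball 0 M).ncard : ℝ)) := by
  obtain ⟨K, hK⟩ := hcount (max M₀ 1) (le_max_left _ _)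
  have hne k : (X (k + K)).Nonempty := by
    have hpos : 0 < c * max M₀ 1 ^ n := by positivity
    have hcard := hpos.trans_le (hK (k + K) (Nat.le_add_left _ _))
    exact (nonempty_of_ncard_ne_zero (by exact_mod_cast hcard.ne')).mono inter_subset_left
  obtain ⟨Y, φ, hφ, hYsep, hYlim, hYcount⟩ :=
    exists_subseq_weakLimit hδ hne fun k => hsep (k + K)
  have hYlower M (hM : max δ (M₀ + δ / 2) ≤ M) :
      c / 2 ^ n * M ^ n ≤ (Y ∩ ball 0 M).ncard := by
    obtain ⟨hδM, hM₀M⟩ := max_le_iff.1 hM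
    obtain ⟨k₀, hk₀⟩ := hcount (M - δ / 2) (by linarith)
    obtain ⟨j, hj, hjk⟩ :=
      ((hYcount (M - δ / 2)).and (hφ.tendsto_atTop.eventually_ge_atTop k₀)).exists
    rw [sub_add_cancel] at hj
    calc c / 2 ^ n * M ^ n = c * (M / 2) ^ n := by rw [div_pow]; ring
      _ ≤ c * (M - δ / 2) ^ n := by gcongr <;> linarith
      _ ≤ (X (φ j + K) ∩ ball 0 (M - δ / 2)).ncard := hk₀ _ (hjk.trans (Nat.le_add_right _ _))
      _ ≤ (Y ∩ ball 0 M).ncard := by exact_mod_cast hj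
  refine ⟨Y, fun j => φ j + K, hφ.add_const K, ?_, hYsep, hYlim,
    c / 2 ^ n, by positivity, _, hYlower⟩
  exact Set.infinite_of_tendsto_atTop_le_ncard
    ((tendsto_pow_atTop (by omega)).const_mul_atTop (by positivity))
    ((eventually_ge_atTop _).mono hYlower)
end
end
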